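/- arXiv:2210.09607 — 2 statements merged into one kernel-verified Lean document; each statement's English description precedes it below -/
import Mathlib

section
/- Let K, A, B > 0 and let φ : (0, ∞) → [0, ∞) be a measurable function satisfying φ(t) ≤ min( A·e^{−Kt}, B·K/(e^{Kt}(e^{Kt} − 1)) ) for every t > 0. Then ∫₀^∞ φ(t) dt ≤ B·log(1 + A/(B·K)). -/
/-!
Bound `φ` by `A e^{-Kt}` up to a time `u` and by `BK / (e^{Kt}(e^{Kt} - 1))` after it. The
second bound has the explicit primitive `B (log (1 - e^{-Kt}) + e^{-Kt})`, so for every `u > 0`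
the integral of `φ` is at most `A (1 - e^{-Ku}) / K - B (log (1 - e^{-Ku}) + e^{-Ku})`. At the
time where the two bounds cross, `e^{Ku} = 1 + BK/A`, this equals `B log (1 + A/(BK))`.
-/

open MeasureTheory Set Filter Real Topology

lemma integrableOn_of_nonneg_of_le {μ : Measure ℝ} {s : Set ℝ} {f g : ℝ → ℝ}
    (hg : IntegrableOn g s μ) (hf : AEStronglyMeasurable f (μ.restrict s)) (hs : MeasurableSet s)
    (hf0 : ∀ t ∈ s, 0 ≤ f t) (hfg : ∀ t ∈ s, f t ≤ g t) : IntegrableOn f s μ :=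
  hg.mono' hf <| (ae_restrict_iff' hs).2 <| .of_forall fun t ht => by
    rw [Real.norm_of_nonneg (hf0 t ht)]; exact hfg t ht

lemma setIntegral_Ioi_le_of_le_on_Ioc_of_le_on_Ioi {μ : Measure ℝ} {φ g h : ℝ → ℝ} {a u : ℝ}
    (hau : a ≤ u) (hφ : AEStronglyMeasurable φ (μ.restrict (Ioi a)))
    (hφ0 : ∀ t ∈ Ioi a, 0 ≤ φ t) (hg : IntegrableOn g (Ioc a u) μ)
    (hh : IntegrableOn h (Ioi u) μ)
    (hφg : ∀ t ∈ Ioc a u, φ t ≤ g t) (hφh : ∀ t ∈ Ioi u, φ t ≤ h t) :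
    ∫ t in Ioi a, φ t ∂μ ≤ (∫ t in Ioc a u, g t ∂μ) + ∫ t in Ioi u, h t ∂μ := by
  have hIoc : IntegrableOn φ (Ioc a u) μ :=
    integrableOn_of_nonneg_of_le hg
      (hφ.mono_measure (Measure.restrict_mono Ioc_subset_Ioi_self le_rfl)) measurableSet_Ioc
      (fun t ht => hφ0 t ht.1) hφg
  have hIoi : IntegrableOn φ (Ioi u) μ :=
    integrableOn_of_nonneg_of_le hh
      (hφ.mono_measure (Measure.restrict_mono (Ioi_subset_Ioi hau) le_rfl)) measurableSet_Ioi
      (fun t ht => hφ0 t (hau.trans_lt ht)) hφh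
  rw [← Ioc_union_Ioi_eq_Ioi hau,
    setIntegral_union (Ioc_disjoint_Ioi le_rfl) measurableSet_Ioi hIoc hIoi]
  exact add_le_add (setIntegral_mono_on hIoc hg measurableSet_Ioc hφg)
    (setIntegral_mono_on hIoi hh measurableSet_Ioi hφh)

lemma integral_Ioc_exp_neg_mul {K a b : ℝ} (hK : K ≠ 0) (hab : a ≤ b) :
    ∫ t in Ioc a b, exp (-K * t) = (exp (-K * a) - exp (-K * b)) / K := by
  rw [← intervalIntegral.integral_of_le hab,
    intervalIntegral.integral_comp_mul_left (fun t => exp t) (neg_ne_zero.2 hK), integral_exp,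
    smul_eq_mul, inv_neg]
  ring

lemma hasDerivAt_log_one_sub_exp_add_exp {K t : ℝ} (hKt : K * t ≠ 0) :
    HasDerivAt (fun s => log (1 - exp (-K * s)) + exp (-K * s))
      (K / (exp (K * t) * (exp (K * t) - 1))) t := by
  have hexp : HasDerivAt (fun s => exp (-K * s)) (exp (-K * t) * -K) t := by
    simpa using ((hasDerivAt_id t).const_mul (-K)).exp
  have hne : 1 - exp (-K * t) ≠ 0 := by
    rw [sub_ne_zero, ne_comm, Ne, exp_eq_one_iff]; simpa using hKt
  refine (((hexp.const_sub 1).log hne).add hexp).congr_deriv ?_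
  have h1 : exp (K * t) - 1 ≠ 0 := by
    rw [sub_ne_zero, Ne, exp_eq_one_iff]; exact hKt
  rw [neg_mul, exp_neg]
  field_simp
  ring

lemma tendsto_log_one_sub_exp_add_exp_atTop {K : ℝ} (hK : 0 < K) :
    Tendsto (fun t => log (1 - exp (-K * t)) + exp (-K * t)) atTop (𝓝 0) := by
  have hexp : Tendsto (fun t => exp (-K * t)) atTop (𝓝 0) :=
    tendsto_exp_atBot.comp <| tendsto_id.const_mul_atTop_of_neg (neg_neg_of_pos hK)
  have hlog : Tendsto (fun t => log (1 - exp (-K * t))) atTop (𝓝 0) := by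
    simpa [Function.comp_def] using ((continuousAt_log one_ne_zero).tendsto.comp
      (by simpa using (tendsto_const_nhds (x := (1 : ℝ))).sub hexp))
  simpa using hlog.add hexp

lemma integrableOn_and_integral_Ioi_div_exp_mul_exp_sub_one {K u : ℝ} (hK : 0 < K) (hu : 0 < u) :
    IntegrableOn (fun t => K / (exp (K * t) * (exp (K * t) - 1))) (Ioi u) ∧
      ∫ t in Ioi u, K / (exp (K * t) * (exp (K * t) - 1)) =
        -(log (1 - exp (-K * u)) + exp (-K * u)) := by
  have hderiv : ∀ t ∈ Ici u, HasDerivAt (fun s => log (1 - exp (-K * s)) + exp (-K * s))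
      (K / (exp (K * t) * (exp (K * t) - 1))) t := fun t ht =>
    hasDerivAt_log_one_sub_exp_add_exp (mul_pos hK (hu.trans_le ht)).ne'
  have hnonneg : ∀ t ∈ Ioi u, 0 ≤ K / (exp (K * t) * (exp (K * t) - 1)) := fun t ht => by
    have : 1 ≤ exp (K * t) := one_le_exp (mul_pos hK (hu.trans ht)).le
    have : 0 ≤ exp (K * t) - 1 := by linarith
    positivity
  have hlim := tendsto_log_one_sub_exp_add_exp_atTop hK
  exact ⟨integrableOn_Ioi_deriv_of_nonneg' hderiv hnonneg hlim,
    by rw [integral_Ioi_of_hasDerivAt_of_nonneg' hderiv hnonneg hlim, zero_sub]⟩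

theorem setIntegral_Ioi_le_of_le_min {K A B u : ℝ} (hK : 0 < K) (hu : 0 < u) {φ : ℝ → ℝ}
    (hφ : AEStronglyMeasurable φ (volume.restrict (Ioi 0))) (hφ0 : ∀ t > 0, 0 ≤ φ t)
    (hbound : ∀ t > 0,
      φ t ≤ min (A * exp (-K * t)) (B * K / (exp (K * t) * (exp (K * t) - 1)))) :
    ∫ t in Ioi 0, φ t ≤
      A * (1 - exp (-K * u)) / K - B * (log (1 - exp (-K * u)) + exp (-K * u)) := by
  obtain ⟨htail_int, htail⟩ := integrableOn_and_integral_Ioi_div_exp_mul_exp_sub_one hK hu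
  have hsplit := setIntegral_Ioi_le_of_le_on_Ioc_of_le_on_Ioi hu.le hφ hφ0
    (g := fun t => A * exp (-K * t)) (h := fun t => B * (K / (exp (K * t) * (exp (K * t) - 1))))
    (Continuous.integrableOn_Ioc (by fun_prop)) (htail_int.const_mul B)
    (fun t ht => (hbound t ht.1).trans (min_le_left _ _))
    (fun t ht => by rw [← mul_div_assoc]; exact (hbound t (hu.trans ht)).trans (min_le_right _ _))
  rw [integral_const_mul, integral_const_mul, integral_Ioc_exp_neg_mul hK.ne' hu.le, htail,
    mul_zero, exp_zero] at hsplit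
  exact hsplit.trans_eq (by ring)

theorem hsi_deterministic (K A B : ℝ) (hK : 0 < K) (hA : 0 < A) (hB : 0 < B)
    (φ : ℝ → ℝ) (hmeas : Measurable φ) (hφ : ∀ t > 0, 0 ≤ φ t)
    (hbound : ∀ t > 0,
      φ t ≤ min (A * Real.exp (-K * t)) (B * K / (Real.exp (K * t) * (Real.exp (K * t) - 1)))) :
    ∫ t in Set.Ioi (0 : ℝ), φ t ≤ B * Real.log (1 + A / (B * K)) := by
  set u := log (1 + B * K / A) / K
  have hu : 0 < u := div_pos (log_pos (lt_add_of_pos_right 1 (by positivity))) hK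
  have hcross : exp (-K * u) = A / (A + B * K) := by
    rw [neg_mul, mul_div_cancel₀ _ hK.ne', exp_neg, exp_log (by positivity)]
    field_simp
  have hgap : 1 - A / (A + B * K) = (1 + A / (B * K))⁻¹ := by
    field_simp
    ring
  calc ∫ t in Ioi 0, φ t
      ≤ A * (1 - exp (-K * u)) / K - B * (log (1 - exp (-K * u)) + exp (-K * u)) :=
        setIntegral_Ioi_le_of_le_min hK hu hmeas.aestronglyMeasurable hφ hbound
    _ = B * log (1 + A / (B * K)) := by
      rw [hcross, hgap, log_inv]
      field_simp
      ring
end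

section
/- Let K, B > 0, A ≥ 0, C ≥ 0, and let φ : (0, ∞) → [0, ∞) be measurable with φ(t) ≤ min( A·e^{−Kt}, C·e^{−Kt} + B·K/(e^{Kt}(e^{Kt} − 1)) ) for all t > 0. Then ∫₀^∞ φ(t) dt ≤ min(A, C)/K + B·log(1 + max(A − C, 0)/(B·K)). -/
/-!
Split `(0, ∞)` at a point `u`: on `(0, u]` use `φ ≤ A e^{-Kt}`, beyond `u` use the second estimate,
whose kernel `K / (e^{Kt} (e^{Kt} - 1))` has the primitive `log (1 - e^{-Kt}) + e^{-Kt}`. When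
`A ≤ C` take `u = ∞`; otherwise choose `u` where the two estimates cross, i.e.
`e^{-Ku} = (A - C) / (BK + A - C)`, and the resulting bound simplifies to the claimed one.
-/

open MeasureTheory Set Filter Real Topology

section

variable {K : ℝ}

lemma tendsto_exp_neg_mul_atTop (hK : 0 < K) :
    Tendsto (fun t => exp (-K * t)) atTop (𝓝 0) :=
  tendsto_exp_atBot.comp (tendsto_id.const_mul_atTop_of_neg (neg_neg_of_pos hK))

lemma integral_Ioi_const_mul_exp_neg_mul (hK : 0 < K) (A c : ℝ) :
    ∫ t in Ioi c, A * exp (-K * t) = A * exp (-K * c) / K := by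
  rw [integral_const_mul, integral_exp_mul_Ioi (neg_neg_of_pos hK), neg_div_neg_eq, mul_div_assoc]

lemma hasDerivAt_log_one_sub_exp_neg_mul_add_exp_neg_mul {t : ℝ} (ht : K * t ≠ 0) :
    HasDerivAt (fun x => log (1 - exp (-K * x)) + exp (-K * x))
      (K / (exp (K * t) * (exp (K * t) - 1))) t := by
  have he : HasDerivAt (fun x => exp (-K * x)) (-K * exp (-K * t)) t := by
    simpa [mul_comm] using ((hasDerivAt_id t).const_mul (-K)).exp
  have hE : exp (K * t) - 1 ≠ 0 := by
    rwa [sub_ne_zero, Ne, exp_eq_one_iff]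
  have hne : 1 - exp (-K * t) ≠ 0 := by
    rwa [sub_ne_zero, ne_comm, Ne, exp_eq_one_iff, neg_mul, neg_eq_zero]
  refine (((he.const_sub 1).log hne).add he).congr_deriv ?_
  simp only [neg_mul, exp_neg] at hne ⊢
  field_simp
  ring

lemma tendsto_log_one_sub_exp_neg_mul_add_exp_neg_mul (hK : 0 < K) :
    Tendsto (fun t => log (1 - exp (-K * t)) + exp (-K * t)) atTop (𝓝 0) := by
  have he := tendsto_exp_neg_mul_atTop hK
  have hlog : Tendsto (fun t => log (1 - exp (-K * t))) atTop (𝓝 0) := by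
    have h1 : Tendsto (fun t => 1 - exp (-K * t)) atTop (𝓝 1) := by
      simpa using tendsto_const_nhds.sub he
    simpa [Function.comp_def] using (continuousAt_log one_ne_zero).tendsto.comp h1
  simpa using hlog.add he

lemma div_exp_mul_exp_sub_one_nonneg (hK : 0 ≤ K) {t : ℝ} (ht : 0 ≤ t) :
    0 ≤ K / (exp (K * t) * (exp (K * t) - 1)) := by
  have h1 : 1 ≤ exp (K * t) := one_le_exp (mul_nonneg hK ht)
  have h0 : 0 ≤ exp (K * t) * (exp (K * t) - 1) := by nlinarith
  positivity

variable {u : ℝ}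

lemma hasDerivAt_log_one_sub_exp_neg_mul_add_exp_neg_mul_of_mem_Ici (hK : 0 < K) (hu : 0 < u) :
    ∀ t ∈ Ici u, HasDerivAt (fun x => log (1 - exp (-K * x)) + exp (-K * x))
      (K / (exp (K * t) * (exp (K * t) - 1))) t :=
  fun _ ht => hasDerivAt_log_one_sub_exp_neg_mul_add_exp_neg_mul
    (mul_pos hK (hu.trans_le ht)).ne'

lemma integrableOn_Ioi_div_exp_mul_exp_sub_one (hK : 0 < K) (hu : 0 < u) :
    IntegrableOn (fun t => K / (exp (K * t) * (exp (K * t) - 1))) (Ioi u) :=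
  integrableOn_Ioi_deriv_of_nonneg'
    (hasDerivAt_log_one_sub_exp_neg_mul_add_exp_neg_mul_of_mem_Ici hK hu)
    (fun _ ht => div_exp_mul_exp_sub_one_nonneg hK.le (hu.trans ht).le)
    (tendsto_log_one_sub_exp_neg_mul_add_exp_neg_mul hK)

lemma integral_Ioi_div_exp_mul_exp_sub_one (hK : 0 < K) (hu : 0 < u) :
    ∫ t in Ioi u, K / (exp (K * t) * (exp (K * t) - 1))
      = -log (1 - exp (-K * u)) - exp (-K * u) := by
  rw [integral_Ioi_of_hasDerivAt_of_nonneg'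
    (hasDerivAt_log_one_sub_exp_neg_mul_add_exp_neg_mul_of_mem_Ici hK hu)
    (fun _ ht => div_exp_mul_exp_sub_one_nonneg hK.le (hu.trans ht).le)
    (tendsto_log_one_sub_exp_neg_mul_add_exp_neg_mul hK)]
  ring

end

lemma setIntegral_Ioi_le_sub_add {φ f g : ℝ → ℝ} {a u : ℝ} (hau : a ≤ u)
    (hφ : IntegrableOn φ (Ioi a)) (hf : IntegrableOn f (Ioi a)) (hg : IntegrableOn g (Ioi u))
    (hφf : ∀ t ∈ Ioc a u, φ t ≤ f t) (hφg : ∀ t ∈ Ioi u, φ t ≤ g t) :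
    ∫ t in Ioi a, φ t ≤ (∫ t in Ioi a, f t) - (∫ t in Ioi u, f t) + ∫ t in Ioi u, g t := by
  have hsplit : ∀ h : ℝ → ℝ, IntegrableOn h (Ioi a) →
      ∫ t in Ioi a, h t = (∫ t in Ioc a u, h t) + ∫ t in Ioi u, h t := fun h hh => by
    rw [← setIntegral_union (Ioc_disjoint_Ioi le_rfl) measurableSet_Ioi
      (hh.mono_set Ioc_subset_Ioi_self) (hh.mono_set (Ioi_subset_Ioi hau)),
      Ioc_union_Ioi_eq_Ioi hau]
  have hIoc : ∫ t in Ioc a u, φ t ≤ ∫ t in Ioc a u, f t :=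
    setIntegral_mono_on (hφ.mono_set Ioc_subset_Ioi_self) (hf.mono_set Ioc_subset_Ioi_self)
      measurableSet_Ioc hφf
  have hIoi : ∫ t in Ioi u, φ t ≤ ∫ t in Ioi u, g t :=
    setIntegral_mono_on (hφ.mono_set (Ioi_subset_Ioi hau)) hg measurableSet_Ioi hφg
  rw [hsplit φ hφ, hsplit f hf]
  linarith

/-- The bound on `∫₀^∞ φ` obtained from the first estimate on `(0, u]` and the second on `(u, ∞)`,
written in terms of `s = exp (-K * u)`. -/
noncomputable def splitBound (A B C K s : ℝ) : ℝ :=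
  A / K - (A - C) * s / K - B * log (1 - s) - B * s

lemma setIntegral_Ioi_le_splitBound {φ : ℝ → ℝ} {A B C K u : ℝ} (hK : 0 < K) (hu : 0 < u)
    (hφ : IntegrableOn φ (Ioi 0)) (hφA : ∀ t ∈ Ioc 0 u, φ t ≤ A * exp (-K * t))
    (hφC : ∀ t ∈ Ioi u,
      φ t ≤ C * exp (-K * t) + B * K / (exp (K * t) * (exp (K * t) - 1))) :
    ∫ t in Ioi 0, φ t ≤ splitBound A B C K (exp (-K * u)) := by
  have hCexp : IntegrableOn (fun t => C * exp (-K * t)) (Ioi u) :=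
    (exp_neg_integrableOn_Ioi u hK).const_mul C
  have hker : IntegrableOn (fun t => B * K / (exp (K * t) * (exp (K * t) - 1))) (Ioi u) := by
    simp only [mul_div_assoc]
    exact (integrableOn_Ioi_div_exp_mul_exp_sub_one hK hu).const_mul B
  have htail : ∫ t in Ioi u, (C * exp (-K * t) + B * K / (exp (K * t) * (exp (K * t) - 1)))
      = C * exp (-K * u) / K + B * (-log (1 - exp (-K * u)) - exp (-K * u)) := by
    rw [integral_add hCexp hker, integral_Ioi_const_mul_exp_neg_mul hK]
    simp only [mul_div_assoc]
    rw [integral_const_mul, integral_Ioi_div_exp_mul_exp_sub_one hK hu]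
  calc ∫ t in Ioi 0, φ t
      ≤ (∫ t in Ioi 0, A * exp (-K * t)) - (∫ t in Ioi u, A * exp (-K * t))
          + ∫ t in Ioi u, (C * exp (-K * t) + B * K / (exp (K * t) * (exp (K * t) - 1))) :=
        setIntegral_Ioi_le_sub_add hu.le hφ ((exp_neg_integrableOn_Ioi 0 hK).const_mul A)
          (hCexp.add hker) hφA hφC
    _ = splitBound A B C K (exp (-K * u)) := by
        rw [integral_Ioi_const_mul_exp_neg_mul hK, integral_Ioi_const_mul_exp_neg_mul hK, htail,
          mul_zero, exp_zero, splitBound]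
        ring

lemma splitBound_optimal {A B C K : ℝ} (hK : K ≠ 0) (hB : B ≠ 0) (hBKD : B * K + (A - C) ≠ 0) :
    splitBound A B C K ((A - C) / (B * K + (A - C))) = C / K + B * log (1 + (A - C) / (B * K)) := by
  set s := (A - C) / (B * K + (A - C)) with hs_def
  have hs : s * (B * K + (A - C)) = A - C := div_mul_cancel₀ _ hBKD
  have hlog : 1 - s = (1 + (A - C) / (B * K))⁻¹ := by
    rw [hs_def]
    field_simp
    ring
  have hlin : A / K - (A - C) * s / K - B * s = C / K := by
    field_simp
    linear_combination -hs
  rw [splitBound, hlog, log_inv]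
  linarith

lemma exists_pos_exp_neg_mul_eq {K s : ℝ} (hK : 0 < K) (hs0 : 0 < s) (hs1 : s < 1) :
    ∃ u > 0, exp (-K * u) = s :=
  ⟨-log s / K, div_pos (neg_pos.2 (log_neg hs0 hs1)) hK, by
    rw [show -K * (-log s / K) = log s by field_simp, exp_log hs0]⟩

theorem hsi_deterministic_general_general (K A B C : ℝ) (hK : 0 < K) (hB : 0 < B)
    (φ : ℝ → ℝ) (hmeas : Measurable φ) (hφ : ∀ t > 0, 0 ≤ φ t)
    (hbound : ∀ t > 0,
      φ t ≤ min (A * Real.exp (-K * t))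
        (C * Real.exp (-K * t) + B * K / (Real.exp (K * t) * (Real.exp (K * t) - 1)))) :
    ∫ t in Set.Ioi (0 : ℝ), φ t
      ≤ min A C / K + B * Real.log (1 + max (A - C) 0 / (B * K)) := by
  have hφA : ∀ t > 0, φ t ≤ A * exp (-K * t) := fun t ht => (hbound t ht).trans (min_le_left _ _)
  have hAexp : IntegrableOn (fun t => A * exp (-K * t)) (Ioi 0) :=
    (exp_neg_integrableOn_Ioi 0 hK).const_mul A
  have hint : IntegrableOn φ (Ioi 0) :=
    hAexp.mono' hmeas.aestronglyMeasurable <| (ae_restrict_iff' measurableSet_Ioi).2 <|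
      ae_of_all _ fun t ht => by rw [norm_of_nonneg (hφ t ht)]; exact hφA t ht
  rcases le_or_gt A C with hAC | hCA
  · rw [min_eq_left hAC, max_eq_right (sub_nonpos.2 hAC), zero_div, add_zero, log_one, mul_zero,
      add_zero]
    calc ∫ t in Ioi 0, φ t ≤ ∫ t in Ioi 0, A * exp (-K * t) :=
          setIntegral_mono_on hint hAexp measurableSet_Ioi hφA
      _ = A / K := by rw [integral_Ioi_const_mul_exp_neg_mul hK, mul_zero, exp_zero, mul_one]
  · have hD : 0 < A - C := sub_pos.2 hCA
    have hBKD : 0 < B * K + (A - C) := by positivity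
    obtain ⟨u, hu, hus⟩ : ∃ u > 0, exp (-K * u) = (A - C) / (B * K + (A - C)) :=
      exists_pos_exp_neg_mul_eq hK (div_pos hD hBKD)
        ((div_lt_one hBKD).2 (by linarith [mul_pos hB hK]))
    rw [min_eq_right hCA.le, max_eq_left hD.le, ← splitBound_optimal hK.ne' hB.ne' hBKD.ne', ← hus]
    exact setIntegral_Ioi_le_splitBound hK hu hint (fun t ht => hφA t ht.1)
      fun t ht => (hbound t (hu.trans ht)).trans (min_le_right _ _)

theorem hsi_deterministic_general (K A B C : ℝ) (hK : 0 < K) (hB : 0 < B)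
    (hA : 0 ≤ A) (hC : 0 ≤ C)
    (φ : ℝ → ℝ) (hmeas : Measurable φ) (hφ : ∀ t > 0, 0 ≤ φ t)
    (hbound : ∀ t > 0,
      φ t ≤ min (A * Real.exp (-K * t))
        (C * Real.exp (-K * t) + B * K / (Real.exp (K * t) * (Real.exp (K * t) - 1)))) :
    ∫ t in Set.Ioi (0 : ℝ), φ t
      ≤ min A C / K + B * Real.log (1 + max (A - C) 0 / (B * K)) :=
  hsi_deterministic_general_general K A B C hK hB φ hmeas hφ hbound
end
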